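/- arXiv:0910.0063 — 3 statements merged into one kernel-verified Lean document; each statement's English description precedes it below -/
import Mathlib

section
/- Let A ∈ {0,1}^{m×n} have rank d, let 𝒴 be the convex hull of the columns of A, and for y ∈ 𝒴 let λ^sparse(y) be a solution of minimizing ‖λ‖₀ subject to Aλ = y, 1ᵀλ = 1, λ ≥ 0, and let λ^min(y) be any basic feasible solution of that feasible set. Then for any probability measure on 𝒴 absolutely continuous with respect to the (d−1)-dimensional Lebesgue measure on 𝒴, with probability 1 we have 0 ≤ ‖λ^min(y)‖₀ − ‖λ^sparse(y)‖₀ ≤ 1. -/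
set_option synthInstance.maxHeartbeats 1000000
set_option maxHeartbeats 1000000


open Finset MeasureTheory

/-- Support size (number of nonzero entries) of a vector. -/
noncomputable def supp0 {n : ℕ} (l : Fin n → ℝ) : ℕ :=
  (Finset.univ.filter fun j => l j ≠ 0).card

/-- Feasibility for the consistency polytope `{λ : Aλ = y, 1ᵀλ = 1, λ ≥ 0}`. -/
def Feas {m n : ℕ} (A : Matrix (Fin m) (Fin n) ℝ) (y : Fin m → ℝ) (l : Fin n → ℝ) : Prop :=
  A.mulVec l = y ∧ (∑ j, l j) = 1 ∧ ∀ j, 0 ≤ l j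

/-- The augmented matrix `[A; 1ᵀ]`. -/
def augMat {m n : ℕ} (A : Matrix (Fin m) (Fin n) ℝ) : Matrix (Fin (m + 1)) (Fin n) ℝ :=
  fun i j => if h : (i : ℕ) < m then A ⟨i, h⟩ j else 1

open Module in
/-- A basic feasible solution has support of size at most `rank A + 1`. -/
lemma supp0_le_rank_add_one {m n : ℕ} (A : Matrix (Fin m) (Fin n) ℝ) (l : Fin n → ℝ)
    (h : LinearIndependent ℝ
      (fun s : {j : Fin n // l j ≠ 0} => fun i : Fin (m + 1) => augMat A i s.1)) :
    supp0 l ≤ A.rank + 1 := by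
  classical
  set π : ((Fin (m+1)) → ℝ) →ₗ[ℝ] (Fin m → ℝ) := LinearMap.funLeft ℝ ℝ Fin.castSucc with hπ
  set p := LinearMap.range A.mulVecLin with hp
  set V := p.comap π with hV
  have hcol : ∀ s : {j : Fin n // l j ≠ 0}, (fun i : Fin (m+1) => augMat A i s.1) ∈ V := by
    intro s
    show π _ ∈ p
    refine ⟨Pi.single s.1 1, ?_⟩
    ext i
    have hlt : ((Fin.castSucc i : Fin (m+1)) : ℕ) < m := by simp
    simp [hπ, LinearMap.funLeft_apply, augMat, hlt]
  set b : {j : Fin n // l j ≠ 0} → V := fun s => ⟨_, hcol s⟩ with hb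
  have hbi : LinearIndependent ℝ b := by
    apply LinearIndependent.of_comp V.subtype
    exact h
  have hcard : supp0 l = Fintype.card {j : Fin n // l j ≠ 0} := by
    rw [supp0, Fintype.card_subtype]
  have h1 : Fintype.card {j : Fin n // l j ≠ 0} ≤ finrank ℝ V :=
    hbi.fintype_card_le_finrank
  have hrn := LinearMap.finrank_range_add_finrank_ker (π.domRestrict V)
  have hr : finrank ℝ (LinearMap.range (π.domRestrict V)) ≤ A.rank := by
    rw [Matrix.rank]
    apply Submodule.finrank_mono
    rintro x ⟨⟨v, hv⟩, rfl⟩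
    exact hv
  have hinj : Function.Injective
      ((LinearMap.proj (R := ℝ) (φ := fun _ : Fin (m+1) => ℝ) (Fin.last m)).comp
        (V.subtype.comp (LinearMap.ker (π.domRestrict V)).subtype)) := by
    intro x y hxy
    have hx : π (x : V) = 0 := x.2
    have hy : π (y : V) = 0 := y.2
    have : ((x : V) : Fin (m+1) → ℝ) = ((y : V) : Fin (m+1) → ℝ) := by
      funext i
      induction i using Fin.lastCases with
      | last => exact hxy
      | cast i =>
        have h1 := congrFun hx i
        have h2 := congrFun hy i
        simp only [hπ, LinearMap.funLeft_apply, Pi.zero_apply] at h1 h2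
        rw [h1, h2]
    exact Subtype.ext (Subtype.ext this)
  have hk : finrank ℝ (LinearMap.ker (π.domRestrict V)) ≤ 1 := by
    simpa using LinearMap.finrank_le_finrank_of_injective hinj
  omega

/-- The affine parametrization map of the points consistent with a model supported
on `{j₀} ∪ S`. -/
noncomputable def covMap {m n : ℕ} (A : Matrix (Fin m) (Fin n) ℝ) (j₀ : Fin n)
    (S : Finset (Fin n)) : ({j : Fin n // j ∈ S} → ℝ) → (Fin m → ℝ) :=
  fun c => (fun i => A i j₀) +
    (Matrix.of fun i (s : {j : Fin n // j ∈ S}) => A i s.1 - A i j₀).mulVec c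

lemma covMap_lipschitz {m n : ℕ} (A : Matrix (Fin m) (Fin n) ℝ) (j₀ : Fin n)
    (S : Finset (Fin n)) : ∃ K, LipschitzWith K (covMap A j₀ S) := by
  classical
  set M := Matrix.of fun i (s : {j : Fin n // j ∈ S}) => A i s.1 - A i j₀
  set f := LinearMap.toContinuousLinearMap (M.mulVecLin)
  refine ⟨1 * ‖f‖₊, ?_⟩
  have hiso : Isometry (fun v : Fin m → ℝ => (fun i => A i j₀) + v) :=
    Isometry.of_dist_eq fun x y => dist_add_left _ x y
  have : covMap A j₀ S = (fun v : Fin m → ℝ => (fun i => A i j₀) + v) ∘ f := rfl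
  rw [this]
  exact hiso.lipschitz.comp f.lipschitz

lemma covMap_null {m n d : ℕ} (A : Matrix (Fin m) (Fin n) ℝ) (j₀ : Fin n)
    (S : Finset (Fin n)) (hS : S.card + 2 ≤ d) :
    μH[(d : ℝ) - 1] (Set.range (covMap A j₀ S)) = 0 := by
  classical
  obtain ⟨K, hK⟩ := covMap_lipschitz A j₀ S
  have hdim : dimH (Set.range (covMap A j₀ S)) ≤ S.card := by
    rw [← Set.image_univ]
    refine (hK.dimH_image_le _).trans ?_
    rw [Real.dimH_univ_pi]
    simp [Fintype.card_coe]
  have hcast : ((d : ℝ) - 1) = (((d - 1 : ℕ) : NNReal) : ℝ) := by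
    rw [NNReal.coe_natCast, Nat.cast_sub (by omega : 1 ≤ d)]
    simp
  rw [hcast]
  apply hausdorffMeasure_of_dimH_lt
  refine lt_of_le_of_lt hdim ?_
  rw [← ENNReal.coe_natCast]
  norm_cast
  omega

/-- for a.e. data vector `y` (w.r.t. any probability measure on the convex hull
`𝒴` of the columns of `A` absolutely continuous w.r.t. the `(d−1)`-dimensional Lebesgue
measure on `𝒴`), the support of a basic feasible solution exceeds the support of the
sparsest consistent model by at most one. -/
theorem bfs_almost_sparsest {m n : ℕ} (A : Matrix (Fin m) (Fin n) ℝ)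
    (hA01 : ∀ i j, A i j = 0 ∨ A i j = 1) (d : ℕ) (hd : d = A.rank)
    (Y : Set (Fin m → ℝ))
    (hY : Y = convexHull ℝ {c : Fin m → ℝ | ∃ j, c = fun i => A i j})
    (lamSparse lamMin : (Fin m → ℝ) → (Fin n → ℝ))
    -- `lamSparse y` is a sparsest choice model consistent with `y`
    (hSparse : ∀ y ∈ Y, Feas A y (lamSparse y) ∧
      ∀ l, Feas A y l → supp0 (lamSparse y) ≤ supp0 l)
    -- `lamMin y` is a basic feasible solution of the same feasible set
    (hMin : ∀ y ∈ Y, Feas A y (lamMin y) ∧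
      LinearIndependent ℝ
        (fun s : {j : Fin n // lamMin y j ≠ 0} => fun i : Fin (m + 1) => augMat A i s.1))
    (μ : Measure (Fin m → ℝ)) [IsProbabilityMeasure μ]
    (hsupp : μ Yᶜ = 0)
    (hac : μ ≪ (μH[(d : ℝ) - 1]).restrict Y) :
    ∀ᵐ y ∂μ, supp0 (lamSparse y) ≤ supp0 (lamMin y) ∧
      supp0 (lamMin y) ≤ supp0 (lamSparse y) + 1 := by
  classical
  set B : Set (Fin m → ℝ) := {y | y ∈ Y ∧ supp0 (lamSparse y) + 1 ≤ d} with hBdef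
  set C : Set (Fin m → ℝ) := ⋃ (j₀ : Fin n) (S : Finset (Fin n)) (_ : S.card + 2 ≤ d),
    Set.range (covMap A j₀ S) with hCdef
  -- the bad set is covered by the low-dimensional pieces
  have hBC : B ⊆ C := by
    rintro y ⟨hyY, hysupp⟩
    obtain ⟨⟨hfeq, hfsum, hfnn⟩, -⟩ := hSparse y hyY
    set l := lamSparse y with hl
    set T : Finset (Fin n) := Finset.univ.filter (fun j => l j ≠ 0) with hT
    have hTsum : ∀ f : Fin n → ℝ, ∑ j ∈ T, l j * f j = ∑ j, l j * f j := by
      intro f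
      refine Finset.sum_subset (Finset.subset_univ _) fun j _ hj => ?_
      have : l j = 0 := by
        by_contra hne
        exact hj (Finset.mem_filter.2 ⟨Finset.mem_univ _, hne⟩)
      simp [this]
    have hT1 : ∑ j ∈ T, l j = 1 := by
      have := hTsum fun _ => 1
      simpa [hfsum] using this
    have hTne : T.Nonempty := by
      rcases T.eq_empty_or_nonempty with he | hne
      · rw [he, Finset.sum_empty] at hT1; norm_num at hT1
      · exact hne
    obtain ⟨j₀, hj₀⟩ := hTne
    set S : Finset (Fin n) := T.erase j₀ with hS
    have hTcard : T.card = supp0 l := rfl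
    have hScard : S.card + 1 = T.card := by
      rw [hS, Finset.card_erase_of_mem hj₀]
      have : 1 ≤ T.card := Finset.card_pos.2 ⟨j₀, hj₀⟩
      omega
    have hSd : S.card + 2 ≤ d := by omega
    have hTins : T = insert j₀ S := (Finset.insert_erase hj₀).symm
    have hj₀S : j₀ ∉ S := Finset.notMem_erase _ _
    refine Set.mem_iUnion.2 ⟨j₀, Set.mem_iUnion.2 ⟨S, Set.mem_iUnion.2 ⟨hSd, ?_⟩⟩⟩
    refine ⟨fun s => l s.1, ?_⟩
    funext i
    have hyi : y i = ∑ j, A i j * l j := by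
      rw [← hfeq]; rfl
    have e1 : ∑ s : {j : Fin n // j ∈ S}, (A i s.1 - A i j₀) * l s.1
        = ∑ j ∈ S, (A i j - A i j₀) * l j :=
      Finset.sum_coe_sort S (fun j => (A i j - A i j₀) * l j)
    have e3 : ∑ j ∈ S, l j = 1 - l j₀ := by
      have := hT1
      rw [hTins, Finset.sum_insert hj₀S] at this
      linarith
    have e4 : ∑ j ∈ S, A i j * l j = (∑ j, A i j * l j) - A i j₀ * l j₀ := by
      have h5 : ∑ j ∈ T, l j * A i j = ∑ j, l j * A i j := hTsum _
      rw [hTins, Finset.sum_insert hj₀S] at h5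
      have h6 : ∑ j ∈ S, A i j * l j = ∑ j ∈ S, l j * A i j :=
        Finset.sum_congr rfl fun j _ => mul_comm _ _
      have h7 : (∑ j, A i j * l j) = ∑ j, l j * A i j :=
        Finset.sum_congr rfl fun j _ => mul_comm _ _
      rw [h6, h7]
      linarith
    have e2 : ∑ j ∈ S, (A i j - A i j₀) * l j
        = (∑ j ∈ S, A i j * l j) - (∑ j ∈ S, l j) * A i j₀ := by
      rw [Finset.sum_mul, ← Finset.sum_sub_distrib]
      exact Finset.sum_congr rfl fun j _ => by ring
    show A i j₀ + ∑ s : {j : Fin n // j ∈ S}, (A i s.1 - A i j₀) * l s.1 = y i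
    rw [e1, e2, e3, e4, hyi]
    ring
  -- the cover is Hausdorff-null
  have hC0 : μH[(d : ℝ) - 1] C = 0 := by
    refine measure_iUnion_null fun j₀ => measure_iUnion_null fun S =>
      measure_iUnion_null fun hS => covMap_null A j₀ S hS
  have hμB : μ B = 0 := by
    apply hac
    refine le_antisymm ?_ zero_le
    calc (μH[(d : ℝ) - 1]).restrict Y B ≤ μH[(d : ℝ) - 1] B :=
          Measure.restrict_apply_le _ _
      _ ≤ μH[(d : ℝ) - 1] C := measure_mono hBC
      _ = 0 := hC0
  have h1 : ∀ᵐ y ∂μ, y ∈ Y := by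
    rw [ae_iff]
    exact hsupp
  have h2 : ∀ᵐ y ∂μ, y ∉ B := by
    rw [ae_iff]
    simpa using hμB
  filter_upwards [h1, h2] with y hy hyB
  obtain ⟨hfeasS, hmin⟩ := hSparse y hy
  obtain ⟨hfeasM, hli⟩ := hMin y hy
  have hA := supp0_le_rank_add_one A (lamMin y) hli
  have hnotB : ¬ (supp0 (lamSparse y) + 1 ≤ d) := fun hc => hyB ⟨hy, hc⟩
  exact ⟨hmin _ hfeasM, by omega⟩
end

section
/- Let R and R' be two K-subsets of rows of an L×K i.i.d. Bernoulli(1/2) matrix with |R ∩ R'| = r. The probability that both corresponding K×K submatrices are permutation matrices equals K!·(K−r)!/2^{(2K−r)K}. -/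
open MeasureTheory Finset

/-- The `K×K` submatrix of an `L×K` Boolean matrix `B` on the rows `R` is a permutation
matrix. -/
def PermOnRows {L K : ℕ} (R : Finset (Fin L)) (B : Fin L × Fin K → Bool) : Prop :=
  (∀ i ∈ R, ∃! j : Fin K, B (i, j) = true) ∧
  (∀ j : Fin K, ∃! i : Fin L, i ∈ R ∧ B (i, j) = true)

namespace ProbTwoPermAux

variable {L K : ℕ} {R R' : Finset (Fin L)}

section RowPerm

variable {B : Fin L × Fin K → Bool}

/-- The function sending each row in `R` to its unique `true` column. -/
noncomputable def rowFun (h : PermOnRows R B) (i : {i // i ∈ R}) : Fin K :=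
  Fintype.choose _ (h.1 i.1 i.2)

theorem rowFun_iff (h : PermOnRows R B) (i : {i // i ∈ R}) (j : Fin K) :
    B (i.1, j) = true ↔ rowFun h i = j := by
  constructor
  · intro hj
    exact ((h.1 i.1 i.2).unique (Fintype.choose_spec _ (h.1 i.1 i.2)) hj)
  · rintro rfl
    exact Fintype.choose_spec _ (h.1 i.1 i.2)

theorem rowFun_bijective (h : PermOnRows R B) : Function.Bijective (rowFun h) := by
  constructor
  · intro a b hab
    have ha : B (a.1, rowFun h b) = true := (rowFun_iff h a _).2 hab
    have hb : B (b.1, rowFun h b) = true := (rowFun_iff h b _).2 rfl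
    exact Subtype.ext ((h.2 (rowFun h b)).unique ⟨a.2, ha⟩ ⟨b.2, hb⟩)
  · intro j
    obtain ⟨i, ⟨hiR, hiB⟩, -⟩ := h.2 j
    exact ⟨⟨i, hiR⟩, (rowFun_iff h ⟨i, hiR⟩ j).1 hiB⟩

/-- The permutation (bijection `R ≃ Fin K`) underlying a permutation submatrix. -/
noncomputable def rowPerm (h : PermOnRows R B) : {i // i ∈ R} ≃ Fin K :=
  Equiv.ofBijective (rowFun h) (rowFun_bijective h)

theorem rowPerm_iff (h : PermOnRows R B) (i : {i // i ∈ R}) (j : Fin K) :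
    B (i.1, j) = true ↔ rowPerm h i = j :=
  rowFun_iff h i j

theorem decide_eq_bool {b : Bool} {p : Prop} [Decidable p] (h : b = true ↔ p) :
    decide p = b := by
  cases b
  · simp only [decide_eq_false_iff_not]
    exact fun hp => by simpa using h.2 hp
  · simp only [decide_eq_true_eq]
    exact h.1 rfl

theorem permOnRows_of (σ : {i // i ∈ R} ≃ Fin K)
    (hB : ∀ (i : {i // i ∈ R}) (j : Fin K), B (i.1, j) = true ↔ j = σ i) :
    PermOnRows R B := by
  constructor
  · intro i hi
    exact ⟨σ ⟨i, hi⟩, (hB ⟨i, hi⟩ _).2 rfl, fun j hj => (hB ⟨i, hi⟩ j).1 hj⟩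
  · intro j
    refine ⟨(σ.symm j).1, ⟨(σ.symm j).2, (hB (σ.symm j) j).2 (σ.apply_symm_apply j).symm⟩, ?_⟩
    rintro i ⟨hi, hBi⟩
    have h1 : j = σ ⟨i, hi⟩ := (hB ⟨i, hi⟩ j).1 hBi
    have h2 : σ.symm j = ⟨i, hi⟩ := by rw [h1, σ.symm_apply_apply]
    exact congrArg Subtype.val h2.symm

theorem rowPerm_eq (h : PermOnRows R B) (σ : {i // i ∈ R} ≃ Fin K)
    (hB : ∀ (i : {i // i ∈ R}) (j : Fin K), B (i.1, j) = true ↔ j = σ i) :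
    rowPerm h = σ :=
  Equiv.ext fun i => (rowPerm_iff h i (σ i)).1 ((hB i (σ i)).2 rfl)

end RowPerm

section Build

/-- Build a matrix from a permutation on `R`, a compatible permutation on `R'` and
free values outside `R ∪ R'`. -/
noncomputable def buildB (R R' : Finset (Fin L)) (σ : {i // i ∈ R} ≃ Fin K)
    (τ : {i // i ∈ R'} ≃ Fin K) (c : {x : Fin L × Fin K // x.1 ∉ R ∪ R'} → Bool) :
    Fin L × Fin K → Bool := fun x =>
  if h : x.1 ∈ R then decide (x.2 = σ ⟨x.1, h⟩)
  else if h' : x.1 ∈ R' then decide (x.2 = τ ⟨x.1, h'⟩)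
  else c ⟨x, by simp [Finset.mem_union, h, h']⟩

variable (σ : {i // i ∈ R} ≃ Fin K) (τ : {i // i ∈ R'} ≃ Fin K)
  (c : {x : Fin L × Fin K // x.1 ∉ R ∪ R'} → Bool)

theorem buildB_mem_R {i : Fin L} (h : i ∈ R) (j : Fin K) :
    buildB R R' σ τ c (i, j) = decide (j = σ ⟨i, h⟩) := by
  simp only [buildB, dif_pos h]

theorem buildB_mem_R'
    (compat : ∀ (i : Fin L) (h : i ∈ R) (h' : i ∈ R'), σ ⟨i, h⟩ = τ ⟨i, h'⟩)
    {i : Fin L} (h' : i ∈ R') (j : Fin K) :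
    buildB R R' σ τ c (i, j) = decide (j = τ ⟨i, h'⟩) := by
  by_cases h : i ∈ R
  · rw [buildB_mem_R σ τ c h, compat i h h']
  · simp only [buildB, dif_neg h, dif_pos h']

theorem buildB_not_mem {x : Fin L × Fin K} (h : x.1 ∉ R ∪ R') :
    buildB R R' σ τ c x = c ⟨x, h⟩ := by
  obtain ⟨i, j⟩ := x
  have h1 : i ∉ R := fun hh => h (Finset.mem_union_left _ hh)
  have h2 : i ∉ R' := fun hh => h (Finset.mem_union_right _ hh)
  simp only [buildB, dif_neg h1, dif_neg h2]

theorem permOnRows_buildB_left : PermOnRows R (buildB R R' σ τ c) := by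
  refine permOnRows_of σ fun i j => ?_
  rw [show (i.1, j) = (i.1, j) from rfl, buildB_mem_R σ τ c i.2 j]
  simp

theorem permOnRows_buildB_right
    (compat : ∀ (i : Fin L) (h : i ∈ R) (h' : i ∈ R'), σ ⟨i, h⟩ = τ ⟨i, h'⟩) :
    PermOnRows R' (buildB R R' σ τ c) := by
  refine permOnRows_of τ fun i j => ?_
  rw [buildB_mem_R' σ τ c compat i.2 j]
  simp

end Build

/-- The compatible pairs of permutations on `R` and `R'`. -/
abbrev Compat (R R' : Finset (Fin L)) (K : ℕ) :=
  {p : ({i // i ∈ R} ≃ Fin K) × ({i // i ∈ R'} ≃ Fin K) //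
    ∀ (i : Fin L) (h : i ∈ R) (h' : i ∈ R'), p.1 ⟨i, h⟩ = p.2 ⟨i, h'⟩}

/-- The key structure equivalence: a pair of compatible permutation submatrices is the
same as a compatible pair of bijections together with free bits outside `R ∪ R'`. -/
noncomputable def goodEquiv (R R' : Finset (Fin L)) (K : ℕ) :
    {B : Fin L × Fin K → Bool // PermOnRows R B ∧ PermOnRows R' B} ≃
      Compat R R' K × ({x : Fin L × Fin K // x.1 ∉ R ∪ R'} → Bool) where
  toFun B :=
    ⟨⟨(rowPerm B.2.1, rowPerm B.2.2), fun i h h' => by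
      have h1 : B.1 (i, rowPerm B.2.1 ⟨i, h⟩) = true :=
        (rowPerm_iff B.2.1 ⟨i, h⟩ _).2 rfl
      exact ((rowPerm_iff B.2.2 ⟨i, h'⟩ _).1 h1).symm⟩,
      fun x => B.1 x.1⟩
  invFun pc :=
    ⟨buildB R R' pc.1.1.1 pc.1.1.2 pc.2,
      permOnRows_buildB_left pc.1.1.1 pc.1.1.2 pc.2,
      permOnRows_buildB_right pc.1.1.1 pc.1.1.2 pc.2 pc.1.2⟩
  left_inv := by
    rintro ⟨B, h1, h2⟩
    apply Subtype.ext
    funext x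
    obtain ⟨i, j⟩ := x
    show buildB R R' (rowPerm h1) (rowPerm h2) (fun x => B x.1) (i, j) = B (i, j)
    by_cases hiR : i ∈ R
    · rw [buildB_mem_R _ _ _ hiR j]
      exact decide_eq_bool ((rowPerm_iff h1 ⟨i, hiR⟩ j).trans eq_comm)
    · by_cases hiR' : i ∈ R'
      · rw [buildB_mem_R' _ _ _ (fun i h h' => by
          have hx : B (i, rowPerm h1 ⟨i, h⟩) = true := (rowPerm_iff h1 ⟨i, h⟩ _).2 rfl
          exact ((rowPerm_iff h2 ⟨i, h'⟩ _).1 hx).symm) hiR' j]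
        exact decide_eq_bool ((rowPerm_iff h2 ⟨i, hiR'⟩ j).trans eq_comm)
      · rw [buildB_not_mem _ _ _ (by simp [Finset.mem_union, hiR, hiR'])]
  right_inv := by
    rintro ⟨⟨⟨σ, τ⟩, compat⟩, c⟩
    refine Prod.ext (Subtype.ext (Prod.ext ?_ ?_)) ?_
    · exact rowPerm_eq _ σ fun i j => by
        show buildB R R' σ τ c (i.1, j) = true ↔ j = σ i
        rw [buildB_mem_R σ τ c i.2 j]; simp
    · exact rowPerm_eq _ τ fun i j => by
        show buildB R R' σ τ c (i.1, j) = true ↔ j = τ i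
        rw [buildB_mem_R' σ τ c compat i.2 j]; simp
    · funext x
      exact (buildB_not_mem σ τ c x.2).trans (congrArg c (Subtype.ext rfl))

theorem card_compat {r : ℕ} (hR : R.card = K) (hR' : R'.card = K)
    (hr : (R ∩ R').card = r) [Fintype (Compat R R' K)] :
    Fintype.card (Compat R R' K) = K.factorial * (K - r).factorial := by
  classical
  have e1 : Compat R R' K ≃ Σ σ : ({i // i ∈ R} ≃ Fin K),
      {τ : {i // i ∈ R'} ≃ Fin K //
        ∀ (i : Fin L) (h : i ∈ R) (h' : i ∈ R'), σ ⟨i, h⟩ = τ ⟨i, h'⟩} :=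
    Equiv.subtypeProdEquivSigmaSubtype
      (fun (σ : {i // i ∈ R} ≃ Fin K) (τ : {i // i ∈ R'} ≃ Fin K) =>
        ∀ (i : Fin L) (h : i ∈ R) (h' : i ∈ R'), σ ⟨i, h⟩ = τ ⟨i, h'⟩)
  rw [Fintype.card_congr e1, Fintype.card_sigma]
  have hcR : Fintype.card {i // i ∈ R} = K := by rw [Fintype.card_coe, hR]
  have hcR' : Fintype.card {i // i ∈ R'} = K := by rw [Fintype.card_coe, hR']
  have hfiber : ∀ σ : ({i // i ∈ R} ≃ Fin K),
      Fintype.card {τ : {i // i ∈ R'} ≃ Fin K //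
        ∀ (i : Fin L) (h : i ∈ R) (h' : i ∈ R'), σ ⟨i, h⟩ = τ ⟨i, h'⟩}
        = (K - r).factorial := by
    intro σ
    set s : Set {i // i ∈ R'} := {x | x.1 ∈ R} with hs
    have hf : Function.Injective (fun x : s => σ ⟨x.1.1, x.2⟩) := by
      intro a b hab
      have h2 := σ.injective hab
      rw [Subtype.mk_eq_mk] at h2
      exact Subtype.ext (Subtype.ext h2)
    set e₀ : s ≃ Set.range (fun x : s => σ ⟨x.1.1, x.2⟩) := Equiv.ofInjective _ hf with he₀
    have e2 : {τ : {i // i ∈ R'} ≃ Fin K //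
        ∀ (i : Fin L) (h : i ∈ R) (h' : i ∈ R'), σ ⟨i, h⟩ = τ ⟨i, h'⟩} ≃
        {τ : {i // i ∈ R'} ≃ Fin K // ∀ x : s, τ x = e₀ x} := by
      refine Equiv.subtypeEquivRight fun τ => ?_
      constructor
      · intro h x
        exact (h x.1.1 x.2 x.1.2).symm
      · intro h i hi hi'
        exact (h ⟨⟨i, hi'⟩, hi⟩).symm
    rw [Fintype.card_congr (e2.trans (Equiv.Set.compl e₀))]
    have e5 : s ≃ {i : Fin L // i ∈ R' ∩ R} :=
      { toFun := fun x => ⟨x.1.1, Finset.mem_inter.2 ⟨x.1.2, x.2⟩⟩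
        invFun := fun x => ⟨⟨x.1, (Finset.mem_inter.1 x.2).1⟩, (Finset.mem_inter.1 x.2).2⟩
        left_inv := fun x => rfl
        right_inv := fun x => rfl }
    have hcs : Fintype.card s = r := by
      rw [Fintype.card_congr e5, Fintype.card_coe, Finset.inter_comm, hr]
    have h1 : Fintype.card ↥sᶜ = K - r := by
      rw [Fintype.card_compl_set, hcs, hcR']
    have h2 : Fintype.card ↥(Set.range (fun x : s => σ ⟨x.1.1, x.2⟩))ᶜ = K - r := by
      rw [Fintype.card_compl_set, Set.card_range_of_injective hf, hcs, Fintype.card_fin]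
    obtain ⟨e3⟩ := Fintype.card_eq.mp (h1.trans h2.symm)
    rw [Fintype.card_equiv e3, h1]
  simp only [hfiber]
  obtain ⟨e4⟩ := Fintype.card_eq.mp (hcR.trans (Fintype.card_fin K).symm)
  rw [Finset.sum_const, Finset.card_univ, Fintype.card_equiv e4, hcR, smul_eq_mul]

end ProbTwoPermAux

open ProbTwoPermAux in
/-- for two `K`-subsets of rows `R, R'` with `|R ∩ R'| = r` of an `L×K`
i.i.d. Bernoulli(1/2) matrix, the probability that both corresponding submatrices are
permutation matrices equals `K!·(K−r)!/2^{(2K−r)K}`. -/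
theorem prob_two_perm_submatrices (L K r : ℕ)
    (R R' : Finset (Fin L)) (hR : R.card = K) (hR' : R'.card = K)
    (hr : (R ∩ R').card = r) :
    (Measure.pi fun _ : Fin L × Fin K => (PMF.bernoulli 2⁻¹ (by norm_num)).toMeasure)
      {B : Fin L × Fin K → Bool | PermOnRows R B ∧ PermOnRows R' B}
      = (Nat.factorial K : ENNReal) * (Nat.factorial (K - r) : ENNReal)
        / 2 ^ ((2 * K - r) * K) := by
  classical
  have hmeas : ∀ b : Bool, (2⁻¹ : ENNReal) ≤ 1 := fun _ => by norm_num
  set μ := Measure.pi fun _ : Fin L × Fin K =>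
    (PMF.bernoulli 2⁻¹ (by norm_num)).toMeasure with hμ
  set S : Set (Fin L × Fin K → Bool) := {B | PermOnRows R B ∧ PermOnRows R' B} with hS
  have hsingle : ∀ f : Fin L × Fin K → Bool, μ {f} = (2⁻¹ : ENNReal) ^ (L * K) := by
    intro f
    rw [← Set.univ_pi_singleton f, hμ, Measure.pi_pi]
    have h2 : (1 : ENNReal) - 2⁻¹ = 2⁻¹ := by
      rw [show (1 : ENNReal) = 2⁻¹ + 2⁻¹ by
        rw [← two_mul, ENNReal.mul_inv_cancel (by norm_num) (by norm_num)]]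
      exact ENNReal.add_sub_cancel_right (by norm_num)
    have hb : ∀ x : Fin L × Fin K,
        (PMF.bernoulli (2⁻¹ : NNReal) (by norm_num)).toMeasure {f x} = 2⁻¹ := by
      intro x
      rw [PMF.toMeasure_apply_singleton _ _ (measurableSet_singleton _)]
      cases f x <;> simp [PMF.bernoulli_apply, h2, ENNReal.coe_sub, ENNReal.coe_inv]
    simp only [hb]
    rw [Finset.prod_const, Finset.card_univ, Fintype.card_prod,
      Fintype.card_fin, Fintype.card_fin]
  haveI : Fintype ↥S := Fintype.ofFinite ↥S
  have hSdecomp : μ S = (S.toFinset.card : ENNReal) * (2⁻¹ : ENNReal) ^ (L * K) := by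
    have hcov : S = ⋃ f ∈ S.toFinset, {f} := by
      simp [Set.biUnion_of_singleton]
    have hdisj : (S.toFinset : Set (Fin L × Fin K → Bool)).PairwiseDisjoint
        (fun f => ({f} : Set (Fin L × Fin K → Bool))) := by
      intro a _ b _ hab
      simp [Function.onFun, Set.disjoint_singleton, hab]
    calc μ S = μ (⋃ f ∈ S.toFinset, ({f} : Set (Fin L × Fin K → Bool))) := by rw [← hcov]
      _ = ∑ f ∈ S.toFinset, μ {f} :=
          measure_biUnion_finset hdisj fun b _ => measurableSet_singleton b
      _ = (S.toFinset.card : ENNReal) * (2⁻¹ : ENNReal) ^ (L * K) := by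
          simp only [hsingle]
          rw [Finset.sum_const, nsmul_eq_mul]
  have hrK : r ≤ K := by
    rw [← hr, ← hR]
    exact Finset.card_le_card Finset.inter_subset_left
  have ha : (R ∪ R').card = 2 * K - r := by
    have := Finset.card_union_add_card_inter R R'
    omega
  have haL : 2 * K - r ≤ L := by
    rw [← ha]
    exact le_trans (Finset.card_le_univ _) (by simp)
  have hcard : S.toFinset.card
      = K.factorial * (K - r).factorial * 2 ^ ((L - (2 * K - r)) * K) := by
    calc S.toFinset.card = Fintype.card ↥S := Set.toFinset_card S
      _ = Fintype.card (ProbTwoPermAux.Compat R R' K ×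
            ({x : Fin L × Fin K // x.1 ∉ R ∪ R'} → Bool)) :=
          Fintype.card_congr ((Equiv.subtypeEquivRight fun B => Iff.rfl).trans
            (ProbTwoPermAux.goodEquiv R R' K))
      _ = K.factorial * (K - r).factorial * 2 ^ ((L - (2 * K - r)) * K) := by
          rw [Fintype.card_prod, ProbTwoPermAux.card_compat hR hR' hr,
            Fintype.card_fun, Fintype.card_bool]
          congr 1
          rw [Fintype.card_congr
            (Equiv.prodSubtypeFstEquivSubtypeProd (p := fun i : Fin L => i ∉ R ∪ R'))]
          rw [Fintype.card_prod, Fintype.card_fin, Fintype.card_subtype_compl,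
            Fintype.card_fin, Fintype.card_coe, ha]
  rw [hSdecomp, hcard]
  have hm : (L - (2 * K - r)) * K + (2 * K - r) * K = L * K := by
    rw [← Nat.add_mul]
    congr 1
    omega
  have key : (2 : ENNReal) ^ ((L - (2 * K - r)) * K) * (2⁻¹ : ENNReal) ^ (L * K)
      = (2⁻¹ : ENNReal) ^ ((2 * K - r) * K) := by
    rw [← hm, pow_add, ← mul_assoc, ← mul_pow,
      ENNReal.mul_inv_cancel (by norm_num) (by norm_num), one_pow, one_mul]
  push_cast
  rw [mul_assoc, key, div_eq_mul_inv, ENNReal.inv_pow]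
end

section
/- Let λ be a probability distribution on the set S_N of permutations of N products, let p : {1,…,N} → [0, p_max] be prices with p(0) = 0, and fix C ≥ 1 and ε > 0. Then there exists a probability distribution λ̂ on S_N whose support has size at most M = ⌈(2C²p_max²/ε²)(log 2C + C log N)⌉ + 1 such that for every offer set 𝓜 ⊆ {0,1,…,N−1} containing 0 with |𝓜| ≤ C, |Σ_{j∈𝓜} p_j λ_j(𝓜) − Σ_{j∈𝓜} p_j λ̂_j(𝓜)| ≤ ε, provided M > (2C²p_max²/ε²)(log 2C + C log N). -/
open Finset

lemma exp_le_cosh_aux {b t y : ℝ} (hb : 0 < b) (hy : |y| ≤ b) :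
    Real.exp (t * y) ≤ Real.cosh (t * b) + (y / b) * Real.sinh (t * b) := by
  obtain ⟨hy1, hy2⟩ := abs_le.mp hy
  have hu : (0:ℝ) ≤ (b + y) / (2 * b) := by
    apply div_nonneg (by linarith) (by linarith)
  have hv : (0:ℝ) ≤ (b - y) / (2 * b) := by
    apply div_nonneg (by linarith) (by linarith)
  have huv : (b + y) / (2 * b) + (b - y) / (2 * b) = 1 := by field_simp; ring
  have hconv := convexOn_exp.2 (Set.mem_univ (t * b)) (Set.mem_univ (-(t * b))) hu hv huv
  simp only [smul_eq_mul] at hconv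
  have harg : (b + y) / (2 * b) * (t * b) + (b - y) / (2 * b) * (-(t * b)) = t * y := by
    field_simp
    ring
  rw [harg] at hconv
  refine hconv.trans (le_of_eq ?_)
  rw [Real.cosh_eq, Real.sinh_eq, Real.exp_neg]
  have : Real.exp (t * b) ≠ 0 := Real.exp_ne_zero _
  field_simp
  ring

lemma chernoff_aux {α : Type*} [Fintype α] (w Y : α → ℝ) (hw : ∀ a, 0 ≤ w a)
    (hw1 : ∑ a, w a = 1) (hY0 : ∑ a, w a * Y a = 0) {b : ℝ} (hb : 0 < b)
    (hYb : ∀ a, |Y a| ≤ b) (M : ℕ) {ε : ℝ} (hε : 0 < ε) :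
    ∑ ω ∈ Finset.univ.filter (fun ω : Fin M → α => (M:ℝ) * ε ≤ ∑ m, Y (ω m)),
      ∏ m, w (ω m) ≤ Real.exp (-((M:ℝ) * ε ^ 2 / (2 * b ^ 2))) := by
  classical
  set t : ℝ := ε / b ^ 2 with ht_def
  have ht : 0 < t := by positivity
  have step1 : ∑ ω ∈ Finset.univ.filter (fun ω : Fin M → α => (M:ℝ) * ε ≤ ∑ m, Y (ω m)),
      ∏ m, w (ω m)
      ≤ ∑ ω : Fin M → α, (∏ m, w (ω m)) * Real.exp (t * (∑ m, Y (ω m) - (M:ℝ) * ε)) := by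
    refine le_trans (Finset.sum_le_sum ?_) (Finset.sum_le_sum_of_subset_of_nonneg
      (Finset.filter_subset _ _) ?_)
    · intro ω hω
      have hcond := (Finset.mem_filter.mp hω).2
      have h1 : (1:ℝ) ≤ Real.exp (t * (∑ m, Y (ω m) - (M:ℝ) * ε)) := by
        rw [← Real.exp_zero]
        apply Real.exp_le_exp.mpr
        have : (0:ℝ) ≤ ∑ m, Y (ω m) - (M:ℝ) * ε := by linarith
        positivity
      have hp : (0:ℝ) ≤ ∏ m, w (ω m) := Finset.prod_nonneg fun m _ => hw _
      nlinarith [Real.exp_pos (t * (∑ m, Y (ω m) - (M:ℝ) * ε))]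
    · intro ω _ _
      have hp : (0:ℝ) ≤ ∏ m, w (ω m) := Finset.prod_nonneg fun m _ => hw _
      positivity
  have step2 : ∀ ω : Fin M → α, (∏ m, w (ω m)) * Real.exp (t * (∑ m, Y (ω m) - (M:ℝ) * ε))
      = Real.exp (-(t * ((M:ℝ) * ε))) * ∏ m, (w (ω m) * Real.exp (t * Y (ω m))) := by
    intro ω
    rw [Finset.prod_mul_distrib, ← Real.exp_sum]
    have : ∑ m, t * Y (ω m) = t * ∑ m, Y (ω m) := by rw [Finset.mul_sum]
    rw [this, mul_sub, Real.exp_sub, Real.exp_neg]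
    ring
  have step3 : ∑ ω : Fin M → α, (∏ m, w (ω m)) * Real.exp (t * (∑ m, Y (ω m) - (M:ℝ) * ε))
      = Real.exp (-(t * ((M:ℝ) * ε))) * (∑ a, w a * Real.exp (t * Y a)) ^ M := by
    simp_rw [step2, ← Finset.mul_sum]
    rw [Fintype.sum_pow]
  have mgf : ∑ a, w a * Real.exp (t * Y a) ≤ Real.exp ((t * b) ^ 2 / 2) := by
    have h1 : ∑ a, w a * Real.exp (t * Y a)
        ≤ ∑ a, w a * (Real.cosh (t * b) + (Y a / b) * Real.sinh (t * b)) := by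
      refine Finset.sum_le_sum fun a _ => ?_
      exact mul_le_mul_of_nonneg_left (exp_le_cosh_aux hb (hYb a)) (hw a)
    have h2 : ∑ a, w a * (Real.cosh (t * b) + (Y a / b) * Real.sinh (t * b))
        = Real.cosh (t * b) := by
      have : ∀ a, w a * (Real.cosh (t * b) + (Y a / b) * Real.sinh (t * b))
          = w a * Real.cosh (t * b) + (w a * Y a) * (Real.sinh (t * b) / b) := by
        intro a; field_simp
      simp_rw [this, Finset.sum_add_distrib, ← Finset.sum_mul, hw1, hY0, one_mul, zero_mul,
        add_zero]
    calc ∑ a, w a * Real.exp (t * Y a) ≤ Real.cosh (t * b) := h1.trans_eq h2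
      _ ≤ Real.exp ((t * b) ^ 2 / 2) := by
          simpa using Real.cosh_le_exp_half_sq (t * b)
  have hnn : (0:ℝ) ≤ ∑ a, w a * Real.exp (t * Y a) := by
    refine Finset.sum_nonneg fun a _ => ?_
    have := hw a
    positivity
  refine step1.trans ?_
  rw [step3]
  have hpow : (∑ a, w a * Real.exp (t * Y a)) ^ M ≤ Real.exp ((t * b) ^ 2 / 2) ^ M :=
    pow_le_pow_left₀ hnn mgf M
  have := mul_le_mul_of_nonneg_left hpow (le_of_lt (Real.exp_pos (-(t * ((M:ℝ) * ε)))))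
  refine this.trans (le_of_eq ?_)
  rw [← Real.exp_nat_mul, ← Real.exp_add]
  congr 1
  have hb2 : b ^ 2 ≠ 0 := by positivity
  rw [ht_def]
  field_simp
  ring

lemma card_small_sets_le {N C : ℕ} (x0 : Fin N) :
    (Finset.univ.filter (fun S : Finset (Fin N) => x0 ∈ S ∧ S.card ≤ C)).card ≤ N ^ C := by
  classical
  have h := Finset.card_le_card_of_surjOn
    (s := (Finset.univ : Finset (Fin C → Fin N)))
    (t := Finset.univ.filter (fun S : Finset (Fin N) => x0 ∈ S ∧ S.card ≤ C))
    (fun f : Fin C → Fin N => Finset.univ.image f) ?_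
  · calc _ ≤ (Finset.univ : Finset (Fin C → Fin N)).card := h
      _ = N ^ C := by simp [Finset.card_univ]
  · intro S hS
    simp only [Finset.coe_filter, Set.mem_setOf_eq, Finset.mem_univ, true_and] at hS
    obtain ⟨h0, hc⟩ := hS
    set l := S.toList with hl_def
    have hl : l.length = S.card := Finset.length_toList S
    refine ⟨fun i : Fin C => l.getD i.1 x0, by simp, ?_⟩
    ext j
    simp only [Finset.mem_image, Finset.mem_univ, true_and]
    constructor
    · rintro ⟨i, rfl⟩
      by_cases hi : (i : ℕ) < l.length
      · rw [List.getD_eq_getElem l x0 hi]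
        exact (Finset.mem_toList).mp (List.getElem_mem hi)
      · rw [List.getD_eq_default l x0 (le_of_not_gt hi)]
        exact h0
    · intro hj
      have hjl : j ∈ l := (Finset.mem_toList).mpr hj
      obtain ⟨k, hk, hkj⟩ := List.mem_iff_getElem.mp hjl
      have hkC : k < C := lt_of_lt_of_le (by rw [hl] at hk; exact hk) hc
      exact ⟨⟨k, hkC⟩, by rw [List.getD_eq_getElem l x0 (by simpa using hk)]; exact hkj⟩

/-- The probability, under the choice model `lam`, that a customer offered the assortment
`S` purchases product `j`: the mass of permutations ranking `j` above every other item
of `S`. -/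
def chooseProb {N : ℕ} (lam : Equiv.Perm (Fin N) → ℝ) (S : Finset (Fin N)) (j : Fin N) : ℝ :=
  ∑ σ ∈ Finset.univ.filter (fun σ : Equiv.Perm (Fin N) => ∀ i ∈ S, i ≠ j → σ j < σ i), lam σ

/-- any choice model `lam` on permutations of `N` products admits a sparse
approximation `lamhat` of support size at most
`M = ⌈(2C²p_max²/ε²)(log 2C + C log N)⌉ + 1` whose revenue on every offer set of size
at most `C` containing the no-purchase option `0` is within `ε` of that of `lam`. -/
theorem sparse_choice_model_approximation (N C : ℕ) (hN : 0 < N) (hC : 1 ≤ C)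
    (ε pmax : ℝ) (hε : 0 < ε) (hpmax : 0 < pmax)
    (p : Fin N → ℝ) (hp : ∀ j, 0 ≤ p j ∧ p j ≤ pmax) (hp0 : p ⟨0, hN⟩ = 0)
    (lam : Equiv.Perm (Fin N) → ℝ) (hlam : ∀ σ, 0 ≤ lam σ) (hlamsum : ∑ σ, lam σ = 1)
    (M : ℕ)
    (hM : M = ⌈(2 * C ^ 2 * pmax ^ 2 / ε ^ 2) *
      (Real.log (2 * C) + C * Real.log N)⌉₊ + 1)
    (hM' : (M : ℝ) > (2 * C ^ 2 * pmax ^ 2 / ε ^ 2) *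
      (Real.log (2 * C) + C * Real.log N)) :
    ∃ lamhat : Equiv.Perm (Fin N) → ℝ,
      (∀ σ, 0 ≤ lamhat σ) ∧ (∑ σ, lamhat σ) = 1 ∧
      (Finset.univ.filter fun σ => lamhat σ ≠ 0).card ≤ M ∧
      ∀ S : Finset (Fin N), (⟨0, hN⟩ : Fin N) ∈ S → S.card ≤ C →
        |(∑ j ∈ S, p j * chooseProb lam S j) - ∑ j ∈ S, p j * chooseProb lamhat S j| ≤ ε := by
  classical
  set x0 : Fin N := ⟨0, hN⟩ with hx0
  have hMpos : 0 < M := by rw [hM]; exact Nat.succ_pos _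
  have hMR : (0:ℝ) < (M:ℝ) := by exact_mod_cast hMpos
  -- the per-sample revenue function
  set g : Finset (Fin N) → Equiv.Perm (Fin N) → ℝ :=
    fun S σ => ∑ j ∈ S, if (∀ i ∈ S, i ≠ j → σ j < σ i) then p j else 0 with hg_def
  have hrev : ∀ (l : Equiv.Perm (Fin N) → ℝ) (S : Finset (Fin N)),
      ∑ j ∈ S, p j * chooseProb l S j = ∑ σ, l σ * g S σ := by
    intro l S
    simp_rw [chooseProb, Finset.sum_filter, Finset.mul_sum]
    rw [Finset.sum_comm]
    refine Finset.sum_congr rfl fun σ _ => ?_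
    rw [Finset.mul_sum]
    refine Finset.sum_congr rfl fun j _ => ?_
    split <;> ring
  have hg0 : ∀ S σ, 0 ≤ g S σ := by
    intro S σ
    refine Finset.sum_nonneg fun j _ => ?_
    split
    · exact (hp j).1
    · exact le_refl 0
  have hgpm : ∀ S σ, g S σ ≤ pmax := by
    intro S σ
    by_cases hex : ∃ j ∈ S, ∀ i ∈ S, i ≠ j → σ j < σ i
    · obtain ⟨j₀, hj₀S, hj₀⟩ := hex
      have heq : g S σ = p j₀ := by
        rw [hg_def]
        beta_reduce
        rw [Finset.sum_eq_single_of_mem j₀ hj₀S]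
        · rw [if_pos hj₀]
        · intro j hjS hne
          rw [if_neg]
          intro hj
          exact absurd (hj₀ j hjS hne) (lt_asymm (hj j₀ hj₀S hne.symm))
      rw [heq]; exact (hp j₀).2
    · push_neg at hex
      have heq : g S σ = 0 := by
        refine Finset.sum_eq_zero fun j hj => ?_
        rw [if_neg]
        intro hcond
        obtain ⟨i, hiS, hine, hlt⟩ := hex j hj
        exact absurd (hcond i hiS hine) (not_lt.mpr hlt)
      rw [heq]; exact le_of_lt hpmax
  -- mean revenue and centered variables
  set μ : Finset (Fin N) → ℝ := fun S => ∑ σ, lam σ * g S σ with hμ_def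
  have hμ0 : ∀ S, 0 ≤ μ S := fun S =>
    Finset.sum_nonneg fun σ _ => mul_nonneg (hlam σ) (hg0 S σ)
  have hμpm : ∀ S, μ S ≤ pmax := by
    intro S
    calc μ S ≤ ∑ σ, lam σ * pmax :=
          Finset.sum_le_sum fun σ _ => mul_le_mul_of_nonneg_left (hgpm S σ) (hlam σ)
      _ = pmax := by rw [← Finset.sum_mul, hlamsum, one_mul]
  set Y : Finset (Fin N) → Equiv.Perm (Fin N) → ℝ := fun S σ => g S σ - μ S with hY_def
  have hYb : ∀ S σ, |Y S σ| ≤ pmax := fun S σ =>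
    abs_le.mpr ⟨by have := hg0 S σ; have := hμpm S; simp only [hY_def]; linarith,
      by have := hgpm S σ; have := hμ0 S; simp only [hY_def]; linarith⟩
  have hY0 : ∀ S, ∑ σ, lam σ * Y S σ = 0 := by
    intro S
    simp only [hY_def, mul_sub]
    rw [Finset.sum_sub_distrib, ← Finset.sum_mul, hlamsum, one_mul]
    exact sub_self _
  -- the family of offer sets
  set 𝒮 : Finset (Finset (Fin N)) :=
    Finset.univ.filter (fun S : Finset (Fin N) => x0 ∈ S ∧ S.card ≤ C) with h𝒮_def
  have hcard𝒮 : (𝒮.card : ℝ) ≤ (N:ℝ) ^ C := by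
    rw [h𝒮_def]
    exact_mod_cast card_small_sets_le (C := C) x0
  -- numeric bound
  set δ : ℝ := Real.exp (-((M:ℝ) * ε ^ 2 / (2 * pmax ^ 2))) with hδ_def
  have hNR : (1:ℝ) ≤ (N:ℝ) := by exact_mod_cast hN
  have hCR : (1:ℝ) ≤ (C:ℝ) := by exact_mod_cast hC
  have hlogN : 0 ≤ Real.log N := Real.log_nonneg hNR
  have hNC0 : (0:ℝ) < (N:ℝ) ^ C := by positivity
  have hkey : (𝒮.card : ℝ) * (2 * δ) < 1 := by
    have hL0 : 0 ≤ Real.log (2 * C) + C * Real.log N := by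
      have h2C : (1:ℝ) ≤ 2 * (C:ℝ) := by linarith
      have := Real.log_nonneg h2C
      positivity
    have h1 : 2 * (C:ℝ) ^ 2 * pmax ^ 2 / ε ^ 2 * (Real.log (2 * C) + C * Real.log N)
        * (ε ^ 2 / (2 * pmax ^ 2)) = (C:ℝ) ^ 2 * (Real.log (2 * C) + C * Real.log N) := by
      field_simp
    have h2 : (C:ℝ) ^ 2 * (Real.log (2 * C) + C * Real.log N)
        < (M:ℝ) * (ε ^ 2 / (2 * pmax ^ 2)) := by
      have := mul_lt_mul_of_pos_right hM' (show (0:ℝ) < ε ^ 2 / (2 * pmax ^ 2) by positivity)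
      rw [h1] at this
      linarith
    have h3 : Real.log (2 * C) + C * Real.log N
        ≤ (C:ℝ) ^ 2 * (Real.log (2 * C) + C * Real.log N) :=
      le_mul_of_one_le_left hL0 (one_le_pow₀ hCR)
    have h4 : Real.log 2 + C * Real.log N ≤ Real.log (2 * C) + C * Real.log N := by
      have : Real.log 2 ≤ Real.log (2 * C) :=
        Real.log_le_log (by norm_num) (by nlinarith)
      linarith
    have h5 : Real.log (2 * (N:ℝ) ^ C) < (M:ℝ) * ε ^ 2 / (2 * pmax ^ 2) := by
      have hlogmul : Real.log (2 * (N:ℝ) ^ C) = Real.log 2 + C * Real.log N := by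
        rw [Real.log_mul (by norm_num) (ne_of_gt hNC0), Real.log_pow]
      rw [hlogmul]
      have : (M:ℝ) * (ε ^ 2 / (2 * pmax ^ 2)) = (M:ℝ) * ε ^ 2 / (2 * pmax ^ 2) := by ring
      linarith [h2, h3, h4, this]
    have hδlt : δ < (2 * (N:ℝ) ^ C)⁻¹ := by
      rw [hδ_def, ← Real.exp_log (show (0:ℝ) < (2 * (N:ℝ) ^ C)⁻¹ by positivity),
        Real.log_inv]
      exact Real.exp_lt_exp.mpr (by linarith)
    have hδ0 : 0 < δ := Real.exp_pos _
    calc (𝒮.card : ℝ) * (2 * δ) ≤ (N:ℝ) ^ C * (2 * δ) :=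
          mul_le_mul_of_nonneg_right hcard𝒮 (by positivity)
      _ < (N:ℝ) ^ C * (2 * (2 * (N:ℝ) ^ C)⁻¹) :=
          mul_lt_mul_of_pos_left (mul_lt_mul_of_pos_left hδlt two_pos) hNC0
      _ = 1 := by field_simp
  -- the probability space of M i.i.d. samples
  set w : (Fin M → Equiv.Perm (Fin N)) → ℝ := fun ω => ∏ m, lam (ω m) with hw_def
  have hw0 : ∀ ω, 0 ≤ w ω := fun ω => Finset.prod_nonneg fun m _ => hlam _
  have hwsum : ∑ ω, w ω = 1 := by
    have := Fintype.sum_pow lam M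
    rw [hlamsum, one_pow] at this
    exact this.symm
  -- the bad event
  set B : Finset (Fin M → Equiv.Perm (Fin N)) :=
    Finset.univ.filter (fun ω => ∃ S ∈ 𝒮, (M:ℝ) * ε ≤ |∑ m, Y S (ω m)|) with hB_def
  have hBlt : ∑ ω ∈ B, w ω < 1 := by
    have hstep : ∑ ω ∈ B, w ω ≤ ∑ S ∈ 𝒮,
        ((∑ ω ∈ Finset.univ.filter (fun ω : Fin M → Equiv.Perm (Fin N) =>
            (M:ℝ) * ε ≤ ∑ m, Y S (ω m)), w ω) +
         (∑ ω ∈ Finset.univ.filter (fun ω : Fin M → Equiv.Perm (Fin N) =>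
            (M:ℝ) * ε ≤ ∑ m, (-(Y S (ω m)))), w ω)) := by
      have hptwise : ∀ ω ∈ B, w ω ≤ ∑ S ∈ 𝒮,
          ((if (M:ℝ) * ε ≤ ∑ m, Y S (ω m) then w ω else 0) +
           (if (M:ℝ) * ε ≤ ∑ m, (-(Y S (ω m))) then w ω else 0)) := by
        intro ω hω
        obtain ⟨S₀, hS₀, habs⟩ := (Finset.mem_filter.mp hω).2
        refine le_trans ?_ (Finset.single_le_sum (f := fun S =>
          (if (M:ℝ) * ε ≤ ∑ m, Y S (ω m) then w ω else 0) +
          (if (M:ℝ) * ε ≤ ∑ m, (-(Y S (ω m))) then w ω else 0))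
          (fun S _ => add_nonneg (by split_ifs; exacts [hw0 ω, le_rfl])
            (by split_ifs; exacts [hw0 ω, le_rfl])) hS₀)
        beta_reduce
        rcases le_abs.mp habs with h | h
        · rw [if_pos h]
          have h0 : (0:ℝ) ≤ (if (M:ℝ) * ε ≤ ∑ m, (-(Y S₀ (ω m))) then w ω else 0) := by
            split_ifs; exacts [hw0 ω, le_rfl]
          linarith
        · rw [if_pos (show (M:ℝ) * ε ≤ ∑ m, (-(Y S₀ (ω m))) by
            rw [Finset.sum_neg_distrib]; linarith)]
          have h0 : (0:ℝ) ≤ (if (M:ℝ) * ε ≤ ∑ m, Y S₀ (ω m) then w ω else 0) := by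
            split_ifs; exacts [hw0 ω, le_rfl]
          linarith
      calc ∑ ω ∈ B, w ω ≤ ∑ ω ∈ B, ∑ S ∈ 𝒮,
            ((if (M:ℝ) * ε ≤ ∑ m, Y S (ω m) then w ω else 0) +
             (if (M:ℝ) * ε ≤ ∑ m, (-(Y S (ω m))) then w ω else 0)) :=
          Finset.sum_le_sum hptwise
        _ ≤ ∑ ω : Fin M → Equiv.Perm (Fin N), ∑ S ∈ 𝒮,
            ((if (M:ℝ) * ε ≤ ∑ m, Y S (ω m) then w ω else 0) +
             (if (M:ℝ) * ε ≤ ∑ m, (-(Y S (ω m))) then w ω else 0)) := by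
          refine Finset.sum_le_sum_of_subset_of_nonneg (Finset.filter_subset _ _) ?_
          intro ω _ _
          refine Finset.sum_nonneg fun S _ => add_nonneg ?_ ?_ <;>
            · split_ifs; exacts [hw0 ω, le_rfl]
        _ = ∑ S ∈ 𝒮,
            ((∑ ω ∈ Finset.univ.filter (fun ω : Fin M → Equiv.Perm (Fin N) =>
                (M:ℝ) * ε ≤ ∑ m, Y S (ω m)), w ω) +
             (∑ ω ∈ Finset.univ.filter (fun ω : Fin M → Equiv.Perm (Fin N) =>
                (M:ℝ) * ε ≤ ∑ m, (-(Y S (ω m)))), w ω)) := by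
          rw [Finset.sum_comm]
          refine Finset.sum_congr rfl fun S _ => ?_
          rw [Finset.sum_add_distrib, Finset.sum_filter, Finset.sum_filter]
    have hbound : ∀ S ∈ 𝒮,
        ((∑ ω ∈ Finset.univ.filter (fun ω : Fin M → Equiv.Perm (Fin N) =>
            (M:ℝ) * ε ≤ ∑ m, Y S (ω m)), w ω) +
         (∑ ω ∈ Finset.univ.filter (fun ω : Fin M → Equiv.Perm (Fin N) =>
            (M:ℝ) * ε ≤ ∑ m, (-(Y S (ω m)))), w ω)) ≤ 2 * δ := by
      intro S _
      have hb1 := chernoff_aux lam (Y S) hlam hlamsum (hY0 S) hpmax (hYb S) M hε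
      have hb2 := chernoff_aux lam (fun σ => -(Y S σ)) hlam hlamsum
        (by simp only [mul_neg]; rw [Finset.sum_neg_distrib, hY0 S, neg_zero])
        hpmax (fun σ => by rw [abs_neg]; exact hYb S σ) M hε
      rw [hδ_def]
      have e1 : ∑ ω ∈ Finset.univ.filter (fun ω : Fin M → Equiv.Perm (Fin N) =>
          (M:ℝ) * ε ≤ ∑ m, Y S (ω m)), w ω
          = ∑ ω ∈ Finset.univ.filter (fun ω : Fin M → Equiv.Perm (Fin N) =>
          (M:ℝ) * ε ≤ ∑ m, Y S (ω m)), ∏ m, lam (ω m) := rfl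
      have e2 : ∑ ω ∈ Finset.univ.filter (fun ω : Fin M → Equiv.Perm (Fin N) =>
          (M:ℝ) * ε ≤ ∑ m, (-(Y S (ω m)))), w ω
          = ∑ ω ∈ Finset.univ.filter (fun ω : Fin M → Equiv.Perm (Fin N) =>
          (M:ℝ) * ε ≤ ∑ m, (-(Y S (ω m)))), ∏ m, lam (ω m) := rfl
      rw [e1, e2]
      linarith [hb1, hb2]
    calc ∑ ω ∈ B, w ω ≤ ∑ S ∈ 𝒮, (2 * δ) := hstep.trans (Finset.sum_le_sum hbound)
      _ = (𝒮.card : ℝ) * (2 * δ) := by rw [Finset.sum_const, nsmul_eq_mul]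
      _ < 1 := hkey
  -- pick a good sample
  have hBne : ∃ ω₀ : Fin M → Equiv.Perm (Fin N), ω₀ ∉ B := by
    by_contra hcon
    push_neg at hcon
    have : B = Finset.univ := Finset.eq_univ_iff_forall.mpr hcon
    rw [this, hwsum] at hBlt
    exact lt_irrefl 1 hBlt
  obtain ⟨ω₀, hω₀⟩ := hBne
  have hgood : ∀ S ∈ 𝒮, |∑ m, Y S (ω₀ m)| < (M:ℝ) * ε := by
    intro S hS
    by_contra hcon
    push_neg at hcon
    exact hω₀ (Finset.mem_filter.mpr ⟨Finset.mem_univ _, ⟨S, hS, hcon⟩⟩)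
  -- the empirical distribution
  refine ⟨fun σ => ∑ m, if ω₀ m = σ then (M:ℝ)⁻¹ else 0, ?_, ?_, ?_, ?_⟩
  · intro σ
    refine Finset.sum_nonneg fun m _ => ?_
    split
    · positivity
    · exact le_refl 0
  · rw [Finset.sum_comm]
    have : ∀ m : Fin M, ∑ σ : Equiv.Perm (Fin N), (if ω₀ m = σ then (M:ℝ)⁻¹ else 0)
        = (M:ℝ)⁻¹ := by
      intro m
      rw [Finset.sum_ite_eq]
      simp
    simp_rw [this, Finset.sum_const, Finset.card_univ, Fintype.card_fin, nsmul_eq_mul]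
    exact mul_inv_cancel₀ (ne_of_gt hMR)
  · have hsub : (Finset.univ.filter fun σ =>
        (∑ m, if ω₀ m = σ then (M:ℝ)⁻¹ else 0) ≠ 0) ⊆ Finset.univ.image ω₀ := by
      intro σ hσ
      have hne := (Finset.mem_filter.mp hσ).2
      rw [Finset.mem_image]
      by_contra hcon
      push_neg at hcon
      refine hne (Finset.sum_eq_zero fun m _ => ?_)
      rw [if_neg (hcon m (Finset.mem_univ m))]
    exact le_trans (Finset.card_le_card hsub) (le_trans Finset.card_image_le (by simp))
  · intro S hS0 hSC
    have hSmem : S ∈ 𝒮 := Finset.mem_filter.mpr ⟨Finset.mem_univ _, ⟨hS0, hSC⟩⟩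
    have hrevhat : ∑ j ∈ S, p j * chooseProb (fun σ => ∑ m, if ω₀ m = σ then (M:ℝ)⁻¹ else 0) S j
        = (M:ℝ)⁻¹ * ∑ m, g S (ω₀ m) := by
      rw [hrev]
      have : ∀ σ : Equiv.Perm (Fin N),
          (∑ m, if ω₀ m = σ then (M:ℝ)⁻¹ else 0) * g S σ
          = ∑ m, (if ω₀ m = σ then (M:ℝ)⁻¹ * g S σ else 0) := by
        intro σ
        rw [Finset.sum_mul]
        refine Finset.sum_congr rfl fun m _ => ?_
        split <;> ring
      simp_rw [this]
      rw [Finset.sum_comm]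
      have h2 : ∀ m : Fin M, ∑ σ : Equiv.Perm (Fin N),
          (if ω₀ m = σ then (M:ℝ)⁻¹ * g S σ else 0) = (M:ℝ)⁻¹ * g S (ω₀ m) := by
        intro m
        rw [Finset.sum_ite_eq]
        simp
      simp_rw [h2, Finset.mul_sum]
    have hrevlam : ∑ j ∈ S, p j * chooseProb lam S j = μ S := hrev lam S
    rw [hrevhat, hrevlam]
    have hYsum : ∑ m, Y S (ω₀ m) = (∑ m, g S (ω₀ m)) - (M:ℝ) * μ S := by
      simp only [hY_def]
      rw [Finset.sum_sub_distrib, Finset.sum_const, Finset.card_univ, Fintype.card_fin,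
        nsmul_eq_mul]
    have hdiff : μ S - (M:ℝ)⁻¹ * ∑ m, g S (ω₀ m) = -((M:ℝ)⁻¹ * ∑ m, Y S (ω₀ m)) := by
      rw [hYsum]
      field_simp
      ring
    rw [hdiff, abs_neg, abs_mul, abs_inv, abs_of_pos hMR]
    have hg := (hgood S hSmem).le
    calc (M:ℝ)⁻¹ * |∑ m, Y S (ω₀ m)| ≤ (M:ℝ)⁻¹ * ((M:ℝ) * ε) :=
          mul_le_mul_of_nonneg_left hg (by positivity)
      _ = ε := by field_simp
end
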